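/- Let J ⊆ {1,…,n} be a nonempty index set, let ω ∈ R, let x ∈ R^n, and set x' = x + ω·Ĩ_J Ã_Jᵀ (b − Ax). Then ‖x' − x⋆‖²_{AᵀA} ≤ ‖x − x⋆‖²_{AᵀA} − (2ω − ω²·σ_max(Ã_J)²) · ‖Ã_Jᵀ A(x − x⋆)‖₂². -/

import Mathlib

noncomputable section
open Matrix

/-- Squared Euclidean norm `‖v‖₂²` of a vector. -/
def norm2 {ι : Type*} [Fintype ι] (v : ι → ℝ) : ℝ := ∑ i, (v i) ^ 2

/-- Squared Frobenius norm `‖A‖_F²` of a matrix. -/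
def frob2 {ι κ : Type*} [Fintype ι] [Fintype κ] (A : Matrix ι κ ℝ) : ℝ :=
  ∑ i, ∑ j, (A i j) ^ 2

/-- Squared largest singular value `σ_max(B)²`, i.e. the largest eigenvalue of `Bᵀ * B`. -/
def sigmaMaxSq {ι κ : Type*} [Fintype ι] [Fintype κ] [DecidableEq κ]
    (B : Matrix ι κ ℝ) : ℝ :=
  sSup (Set.range (Matrix.isHermitian_conjTranspose_mul_self B).eigenvalues)

/-- Squared smallest singular value `σ_min(B)²`, i.e. the smallest eigenvalue of `Bᵀ * B`. -/
def sigmaMinSq {ι κ : Type*} [Fintype ι] [Fintype κ] [DecidableEq κ]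
    (B : Matrix ι κ ℝ) : ℝ :=
  sInf (Set.range (Matrix.isHermitian_conjTranspose_mul_self B).eigenvalues)

/-- Squared Euclidean norm `‖A_(j)‖₂²` of the `j`-th column of `A`. -/
def col2 {m n : ℕ} (A : Matrix (Fin m) (Fin n) ℝ) (j : Fin n) : ℝ := ∑ i, (A i j) ^ 2

/-- `A` has full column rank: its columns are linearly independent. -/
def FullColRank {m n : ℕ} (A : Matrix (Fin m) (Fin n) ℝ) : Prop :=
  LinearIndependent ℝ fun j : Fin n => (fun i => A i j : Fin m → ℝ)

/-- `max_{1 ≤ j ≤ n} |A_(j)ᵀ r|² / ‖A_(j)‖₂²`. -/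
def maxRatio {m n : ℕ} (A : Matrix (Fin m) (Fin n) ℝ) (r : Fin m → ℝ) : ℝ :=
  ⨆ j : Fin n, ((Aᵀ *ᵥ r) j) ^ 2 / col2 A j

/-- The greedy parameter
`ε = (θ/‖Aᵀr‖₂²)·max_j |A_(j)ᵀ r|²/‖A_(j)‖₂² + (1−θ)/‖A‖_F²`. -/
def eps {m n : ℕ} (A : Matrix (Fin m) (Fin n) ℝ) (r : Fin m → ℝ) (θ : ℝ) : ℝ :=
  θ / norm2 (Aᵀ *ᵥ r) * maxRatio A r + (1 - θ) / frob2 A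

open Classical in
/-- The greedy index set `J = { j : |A_(j)ᵀ r|² ≥ ε ‖Aᵀr‖₂² ‖A_(j)‖₂² }`. -/
def greedySet {m n : ℕ} (A : Matrix (Fin m) (Fin n) ℝ) (r : Fin m → ℝ) (θ : ℝ) :
    Finset (Fin n) :=
  Finset.univ.filter fun j =>
    eps A r θ * norm2 (Aᵀ *ᵥ r) * col2 A j ≤ ((Aᵀ *ᵥ r) j) ^ 2

/-- The column submatrix `A_J` of `A`, with columns indexed by `J`. -/
def subCols {m n : ℕ} (A : Matrix (Fin m) (Fin n) ℝ) (J : Finset (Fin n)) :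
    Matrix (Fin m) {j // j ∈ J} ℝ :=
  A.submatrix id fun j => (j : Fin n)

/-- The submatrix `I_J` of the `n × n` identity with columns indexed by `J`. -/
def subId {n : ℕ} (J : Finset (Fin n)) : Matrix (Fin n) {j // j ∈ J} ℝ :=
  (1 : Matrix (Fin n) (Fin n) ℝ).submatrix id fun j => (j : Fin n)

/-- Moore–Penrose pseudoinverse of a full-column-rank matrix: `B† = (BᵀB)⁻¹Bᵀ`. -/
def pinv {ι κ : Type*} [Fintype ι] [Fintype κ] [DecidableEq κ] (B : Matrix ι κ ℝ) :
    Matrix κ ι ℝ :=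
  (Bᵀ * B)⁻¹ * Bᵀ

/-- The matrix `Ã_J` whose columns are the normalized columns `A_(j)/‖A_(j)‖₂`, `j ∈ J`. -/
def tildeA {m n : ℕ} (A : Matrix (Fin m) (Fin n) ℝ) (J : Finset (Fin n)) :
    Matrix (Fin m) {j // j ∈ J} ℝ :=
  Matrix.of fun i j => A i (j : Fin n) / Real.sqrt (col2 A (j : Fin n))

/-- The matrix `Ĩ_J` whose columns are `e_j/‖A_(j)‖₂`, `j ∈ J`. -/
def tildeI {m n : ℕ} (A : Matrix (Fin m) (Fin n) ℝ) (J : Finset (Fin n)) :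
    Matrix (Fin n) {j // j ∈ J} ℝ :=
  Matrix.of fun i j => (if i = (j : Fin n) then 1 else 0) / Real.sqrt (col2 A (j : Fin n))

/-!
Write `e = A(x − x⋆)`. Since `Ã_J = A Ĩ_J` and the normal equation turns the residual into
`Aᵀ(b − Ax) = −AᵀA(x − x⋆)`, the new error is `A(x' − x⋆) = e − ω Ã_J Ã_Jᵀ e`. Expanding the
square gives `‖e‖² − 2ω‖Ã_Jᵀe‖² + ω²‖Ã_J Ã_Jᵀe‖²`, and the Rayleigh bound
`‖Ã_J u‖² ≤ σ_max(Ã_J)²‖u‖²` controls the last term.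
-/

lemma norm2_eq_dotProduct {ι : Type*} [Fintype ι] (v : ι → ℝ) : norm2 v = v ⬝ᵥ v := by
  simp [norm2, dotProduct, sq]

lemma norm2_sub_smul {ι : Type*} [Fintype ι] (v w : ι → ℝ) (ω : ℝ) :
    norm2 (v - ω • w) = norm2 v - 2 * ω * (v ⬝ᵥ w) + ω ^ 2 * norm2 w := by
  simp only [norm2_eq_dotProduct, dotProduct_sub, sub_dotProduct, dotProduct_smul,
    smul_dotProduct, dotProduct_comm w v, smul_eq_mul]
  ring

open MatrixOrder in
lemma norm2_mulVec_le_sigmaMaxSq_mul {ι κ : Type*} [Fintype ι] [Fintype κ] [DecidableEq κ]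
    (B : Matrix ι κ ℝ) (u : κ → ℝ) : norm2 (B *ᵥ u) ≤ sigmaMaxSq B * norm2 u := by
  have hM := isHermitian_conjTranspose_mul_self B
  -- `BᵀB ≤ σ_max(B)² • 1` in the Loewner order, as its spectrum lies below `σ_max(B)²`.
  have hle : Bᴴ * B ≤ algebraMap ℝ _ (sigmaMaxSq B) := by
    refine le_algebraMap_of_spectrum_le ?_ hM.isSelfAdjoint
    rw [hM.spectrum_real_eq_range_eigenvalues]
    rintro _ ⟨i, rfl⟩
    exact le_csSup (Set.finite_range _).bddAbove ⟨i, rfl⟩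
  have hquad := (Matrix.le_iff.mp hle).dotProduct_mulVec_nonneg u
  rw [sub_mulVec, dotProduct_sub, sub_nonneg, Algebra.algebraMap_eq_smul_one, smul_mulVec,
    one_mulVec, dotProduct_smul, ← mulVec_mulVec, dotProduct_mulVec,
    conjTranspose_eq_transpose_of_trivial, vecMul_transpose] at hquad
  rw [norm2_eq_dotProduct, norm2_eq_dotProduct, dotProduct_comm]
  simpa using hquad

lemma norm2_sub_smul_mulVec_transpose_mulVec_le {ι κ : Type*} [Fintype ι] [Fintype κ]
    [DecidableEq κ] (B : Matrix ι κ ℝ) (e : ι → ℝ) (ω : ℝ) :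
    norm2 (e - ω • (B *ᵥ (Bᵀ *ᵥ e))) ≤
      norm2 e - (2 * ω - ω ^ 2 * sigmaMaxSq B) * norm2 (Bᵀ *ᵥ e) := by
  have hcross : e ⬝ᵥ (B *ᵥ (Bᵀ *ᵥ e)) = norm2 (Bᵀ *ᵥ e) := by
    rw [dotProduct_mulVec, ← mulVec_transpose, norm2_eq_dotProduct]
  have hrayleigh := mul_le_mul_of_nonneg_left
    (norm2_mulVec_le_sigmaMaxSq_mul B (Bᵀ *ᵥ e)) (sq_nonneg ω)
  rw [norm2_sub_smul, hcross]
  linarith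

section NormalEquation

variable {ι κ : Type*} [Fintype ι] [Fintype κ] {A : Matrix ι κ ℝ} {b : ι → ℝ} {xstar : κ → ℝ}

lemma transpose_mulVec_sub_mulVec_eq_neg (hstar : (Aᵀ * A) *ᵥ xstar = Aᵀ *ᵥ b) (x : κ → ℝ) :
    Aᵀ *ᵥ (b - A *ᵥ x) = -(Aᵀ *ᵥ (A *ᵥ (x - xstar))) := by
  rw [mulVec_sub, ← hstar, ← mulVec_mulVec, mulVec_sub, mulVec_sub, neg_sub]

lemma mulVec_add_smul_sub_eq {τ : Type*} [Fintype τ]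
    (hstar : (Aᵀ * A) *ᵥ xstar = Aᵀ *ᵥ b) (C : Matrix κ τ ℝ) (ω : ℝ) (x : κ → ℝ) :
    A *ᵥ (x + ω • (C *ᵥ ((A * C)ᵀ *ᵥ (b - A *ᵥ x))) - xstar) =
      A *ᵥ (x - xstar) - ω • ((A * C) *ᵥ ((A * C)ᵀ *ᵥ (A *ᵥ (x - xstar)))) := by
  have hresidual : (A * C)ᵀ *ᵥ (b - A *ᵥ x) = -((A * C)ᵀ *ᵥ (A *ᵥ (x - xstar))) := by
    rw [transpose_mul, ← mulVec_mulVec, ← mulVec_mulVec, transpose_mulVec_sub_mulVec_eq_neg hstar,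
      mulVec_neg]
  rw [add_sub_right_comm, mulVec_add, mulVec_smul, mulVec_mulVec, hresidual, mulVec_neg,
    smul_neg, ← sub_eq_add_neg]

end NormalEquation

lemma mul_tildeI {m n : ℕ} (A : Matrix (Fin m) (Fin n) ℝ) (J : Finset (Fin n)) :
    A * tildeI A J = tildeA A J := by
  ext i j
  simp only [mul_apply, tildeI, tildeA, of_apply, mul_div_assoc', ← Finset.sum_div, mul_ite,
    mul_one, mul_zero]
  simp

theorem stmt14_general {m n : ℕ} (A : Matrix (Fin m) (Fin n) ℝ)
    (b : Fin m → ℝ) (xstar : Fin n → ℝ) (hstar : (Aᵀ * A) *ᵥ xstar = Aᵀ *ᵥ b)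
    (J : Finset (Fin n)) (ω : ℝ) (x x' : Fin n → ℝ)
    (hx' : x' = x + ω • (tildeI A J *ᵥ ((tildeA A J)ᵀ *ᵥ (b - A *ᵥ x)))) :
    norm2 (A *ᵥ (x' - xstar)) ≤
      norm2 (A *ᵥ (x - xstar)) -
        (2 * ω - ω ^ 2 * sigmaMaxSq (tildeA A J)) *
          norm2 ((tildeA A J)ᵀ *ᵥ (A *ᵥ (x - xstar))) := by
  rw [hx', ← mul_tildeI A J, mulVec_add_smul_sub_eq hstar]
  exact norm2_sub_smul_mulVec_transpose_mulVec_le _ _ _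

/-- one-step bound for the pseudoinverse-free block update
`x' = x + ω Ĩ_J Ã_Jᵀ (b − Ax)`:
`‖x' − x⋆‖²_{AᵀA} ≤ ‖x − x⋆‖²_{AᵀA} − (2ω − ω²σ_max(Ã_J)²)‖Ã_Jᵀ A(x − x⋆)‖₂²`. -/
theorem stmt14 {m n : ℕ} (A : Matrix (Fin m) (Fin n) ℝ) (hA : FullColRank A)
    (b : Fin m → ℝ) (xstar : Fin n → ℝ) (hstar : (Aᵀ * A) *ᵥ xstar = Aᵀ *ᵥ b)
    (J : Finset (Fin n)) (hJ : J.Nonempty) (ω : ℝ) (x x' : Fin n → ℝ)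
    (hx' : x' = x + ω • (tildeI A J *ᵥ ((tildeA A J)ᵀ *ᵥ (b - A *ᵥ x)))) :
    norm2 (A *ᵥ (x' - xstar)) ≤
      norm2 (A *ᵥ (x - xstar)) -
        (2 * ω - ω ^ 2 * sigmaMaxSq (tildeA A J)) *
          norm2 ((tildeA A J)ᵀ *ᵥ (A *ᵥ (x - xstar))) :=
  stmt14_general A b xstar hstar J ω x x' hx'
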